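/- arXiv:2406.07972 — 5 statements merged into one kernel-verified Lean document; each statement's English description precedes it below -/
import Mathlib

section
/- For all y ∈ {1, ..., n+1}^d, the cost C(y) := min_{a ∈ ℝ} ∑_{i=1}^d |y_i - a| equals ∑_{j=1}^{n} wt(#{i : y_i > j}), where wt(k) = min(k, d-k). -/
open Finset

/-! Slice the line into the unit layers `[j, j + 1]`. For `a ∈ [1, n + 1]`, `|yᵢ - a|` is the sum
over the layers `j = 1, …, n` of `|[j < yᵢ] - tⱼ(a)|`, where `tⱼ(a) = unitClamp (a - j) ∈ [0, 1]` is
the portion of the layer lying below `a`. Summing over `i`, layer `j` contributes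
`cⱼ (1 - tⱼ) + (d - cⱼ) tⱼ ≥ min cⱼ (d - cⱼ)` with `cⱼ = #{i | j < yᵢ}`, with equality at an integer
median `m`: there `tⱼ = [j < m]`, and `2 cⱼ > d` holds exactly for `j < m`. Projecting an arbitrary
`a` onto `[1, n + 1]` does not increase any `|yᵢ - a|`. -/

noncomputable def unitClamp (x : ℝ) : ℝ := min (max x 0) 1

lemma unitClamp_nonneg (x : ℝ) : 0 ≤ unitClamp x :=
  le_min (le_max_right _ _) zero_le_one

lemma unitClamp_le_one (x : ℝ) : unitClamp x ≤ 1 :=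
  min_le_right _ _

lemma unitClamp_eq_sub (x : ℝ) : unitClamp x = max x 0 - max (x - 1) 0 := by
  simp only [unitClamp, max_def, min_def]
  split_ifs <;> linarith

lemma unitClamp_natCast_sub (m j : ℕ) : unitClamp ((m : ℝ) - j) = if j < m then 1 else 0 := by
  unfold unitClamp
  split_ifs with h
  · have : (1 : ℝ) ≤ (m : ℝ) - j := by
      rw [le_sub_iff_add_le']; exact_mod_cast h
    rw [max_eq_left (by linarith), min_eq_right this]
  · have : (m : ℝ) ≤ j := by exact_mod_cast not_lt.mp h
    rw [max_eq_right (by linarith), min_eq_left zero_le_one]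

lemma sum_Ico_unitClamp (x : ℝ) {p q : ℕ} (hpq : p ≤ q) :
    ∑ j ∈ Ico p q, unitClamp (x - j) = max (x - p) 0 - max (x - q) 0 := by
  induction q, hpq using Nat.le_induction with
  | base => simp
  | succ q hpq ih =>
    rw [sum_Ico_succ_top hpq, ih, unitClamp_eq_sub]
    push_cast
    ring_nf

lemma abs_sub_eq_sum_abs_ite_sub_unitClamp {n y : ℕ} (hy : 1 ≤ y) (hy' : y ≤ n + 1)
    {a : ℝ} (ha : 1 ≤ a) (ha' : a ≤ n + 1) :
    |(y : ℝ) - a| = ∑ j ∈ Icc 1 n, |(if j < y then 1 else 0) - unitClamp (a - j)| := by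
  have below : ∑ j ∈ Ico 1 y, |(if j < y then 1 else 0) - unitClamp (a - j)|
      = ∑ j ∈ Ico 1 y, (1 - unitClamp (a - j)) := by
    refine sum_congr rfl fun j hj => ?_
    rw [if_pos (mem_Ico.mp hj).2, abs_of_nonneg (sub_nonneg.mpr (unitClamp_le_one _))]
  have above : ∑ j ∈ Ico y (n + 1), |(if j < y then 1 else 0) - unitClamp (a - j)|
      = ∑ j ∈ Ico y (n + 1), unitClamp (a - j) := by
    refine sum_congr rfl fun j hj => ?_
    rw [if_neg (not_lt.mpr (mem_Ico.mp hj).1), zero_sub, abs_neg,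
      abs_of_nonneg (unitClamp_nonneg _)]
  rw [← Ico_add_one_right_eq_Icc, ← sum_Ico_consecutive _ hy hy', below, above, sum_sub_distrib,
    sum_Ico_unitClamp _ hy, sum_Ico_unitClamp _ hy', sum_const, Nat.card_Ico, nsmul_eq_mul,
    Nat.cast_sub hy]
  push_cast
  rw [max_eq_left (sub_nonneg.mpr ha), max_eq_right (by linarith : a - (n + 1) ≤ 0)]
  rcases le_total a y with h | h
  · rw [abs_of_nonneg (sub_nonneg.mpr h), max_eq_right (sub_nonpos.mpr h)]; ring
  · rw [abs_of_nonpos (sub_nonpos.mpr h), max_eq_left (sub_nonneg.mpr h)]; ring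

lemma abs_sub_projIcc_le {lo hi y : ℝ} (h : lo ≤ hi) (hy : y ∈ Set.Icc lo hi) (a : ℝ) :
    |y - Set.projIcc lo hi h a| ≤ |y - a| := by
  simpa [Set.projIcc_of_mem h hy] using Set.abs_projIcc_sub_projIcc h (c := y) (d := a)

lemma min_le_mul_one_sub_add_mul {u v t : ℝ} (ht : 0 ≤ t) (ht' : t ≤ 1) :
    min u v ≤ u * (1 - t) + v * t := by
  nlinarith [min_le_left u v, min_le_right u v]

section Layers

variable {ι : Type*} [Fintype ι]

lemma sum_abs_ite_sub (p : ι → Prop) [DecidablePred p] {t : ℝ} (ht : 0 ≤ t) (ht' : t ≤ 1) :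
    ∑ i, |(if p i then 1 else 0) - t|
      = #{i | p i} * (1 - t) + (Fintype.card ι - #{i | p i}) * t := by
  have hcard := card_filter_add_card_filter_not (s := univ) p
  rw [card_univ] at hcard
  have : ∀ i, |(if p i then 1 else 0) - t| = if p i then 1 - t else t := by
    intro i
    split_ifs
    · exact abs_of_nonneg (by linarith)
    · rw [zero_sub, abs_neg, abs_of_nonneg ht]
  simp only [this, sum_ite, sum_const, nsmul_eq_mul]
  rw [← hcard]
  push_cast
  ring

lemma exists_median (y : ι → ℕ) (hι : 0 < Fintype.card ι) {n : ℕ}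
    (hy : ∀ i, 1 ≤ y i ∧ y i ≤ n + 1) :
    ∃ m, 1 ≤ m ∧ m ≤ n + 1 ∧ ∀ j, 2 * #{i | j < y i} ≤ Fintype.card ι ↔ m ≤ j := by
  have htop : #{i | n + 1 < y i} = 0 := by
    simp only [card_eq_zero, filter_eq_empty_iff, not_lt]
    exact fun i _ => (hy i).2
  have hex : ∃ k, 2 * #{i | k < y i} ≤ Fintype.card ι := ⟨n + 1, by simp [htop]⟩
  have hbottom : #{i | 0 < y i} = Fintype.card ι := by
    rw [filter_true_of_mem fun i _ => Nat.lt_of_lt_of_le Nat.zero_lt_one (hy i).1, card_univ]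
  refine ⟨Nat.find hex, ?_, Nat.find_le (by simp [htop]),
    fun j => ⟨Nat.find_min' hex, fun hj => ?_⟩⟩
  · by_contra! h0
    have := Nat.find_spec hex
    rw [Nat.lt_one_iff.mp h0, hbottom] at this
    omega
  · refine le_trans ?_ (Nat.find_spec hex)
    gcongr

lemma sum_abs_sub_eq_sum_sum_abs_ite_sub {n : ℕ} (y : ι → ℕ) (hy : ∀ i, 1 ≤ y i ∧ y i ≤ n + 1)
    {a : ℝ} (ha : a ∈ Set.Icc 1 ((n : ℝ) + 1)) :
    ∑ i, |(y i : ℝ) - a|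
      = ∑ j ∈ Icc 1 n, ∑ i, |(if j < y i then 1 else 0) - unitClamp (a - j)| := by
  rw [sum_comm]
  exact sum_congr rfl fun i _ =>
    abs_sub_eq_sum_abs_ite_sub_unitClamp (hy i).1 (hy i).2 ha.1 ha.2

lemma min_card_le_sum_abs_ite_sub (p : ι → Prop) [DecidablePred p] {t : ℝ} (ht : 0 ≤ t)
    (ht' : t ≤ 1) :
    min (#{i | p i} : ℝ) (Fintype.card ι - #{i | p i}) ≤ ∑ i, |(if p i then 1 else 0) - t| := by
  rw [sum_abs_ite_sub p ht ht']
  exact min_le_mul_one_sub_add_mul ht ht'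

lemma sum_abs_ite_sub_ite_eq_min (p : ι → Prop) [DecidablePred p] (q : Prop) [Decidable q]
    (hq : 2 * #{i | p i} ≤ Fintype.card ι ↔ ¬q) :
    ∑ i, |(if p i then 1 else 0) - if q then 1 else 0|
      = min (#{i | p i} : ℝ) (Fintype.card ι - #{i | p i}) := by
  rw [sum_abs_ite_sub p (by split_ifs <;> norm_num) (by split_ifs <;> norm_num)]
  by_cases h : q
  · have : (Fintype.card ι : ℝ) < 2 * #{i | p i} := by
      exact_mod_cast not_le.mp (mt hq.mp (not_not.mpr h))
    rw [if_pos h, min_eq_right (by linarith)]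
    ring
  · have : 2 * (#{i | p i} : ℝ) ≤ Fintype.card ι := by exact_mod_cast hq.mpr h
    rw [if_neg h, min_eq_left (by linarith)]
    ring

end Layers

theorem stmt5_general (n d : ℕ) (hd : 2 ≤ d) (y : Fin d → ℕ)
    (hy : ∀ i, 1 ≤ y i ∧ y i ≤ n + 1) :
    IsLeast (Set.range fun a : ℝ => ∑ i, |(y i : ℝ) - a|)
      (∑ j ∈ Finset.Icc 1 n,
        (min (Finset.univ.filter fun i => j < y i).card
             (d - (Finset.univ.filter fun i => j < y i).card) : ℝ)) := by
  obtain ⟨m, hm, hm', hmedian⟩ := exists_median y (by rw [Fintype.card_fin]; omega) hy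
  refine ⟨⟨m, ?_⟩, ?_⟩
  · dsimp only
    rw [sum_abs_sub_eq_sum_sum_abs_ite_sub y hy ⟨by exact_mod_cast hm, by exact_mod_cast hm'⟩]
    refine sum_congr rfl fun j _ => ?_
    rw [unitClamp_natCast_sub, sum_abs_ite_sub_ite_eq_min _ _ ((hmedian j).trans not_lt.symm),
      Fintype.card_fin]
  · rintro _ ⟨a, rfl⟩
    have h1n : (1 : ℝ) ≤ n + 1 := by linarith [n.cast_nonneg (α := ℝ)]
    set b := Set.projIcc 1 ((n : ℝ) + 1) h1n a
    calc _ ≤ ∑ j ∈ Icc 1 n, ∑ i, |(if j < y i then 1 else 0) - unitClamp (b - j)| :=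
          sum_le_sum fun j _ => by
            simpa using min_card_le_sum_abs_ite_sub (fun i => j < y i)
              (unitClamp_nonneg (b - j)) (unitClamp_le_one (b - j))
      _ = ∑ i, |(y i : ℝ) - b| := (sum_abs_sub_eq_sum_sum_abs_ite_sub y hy b.2).symm
      _ ≤ ∑ i, |(y i : ℝ) - a| := sum_le_sum fun i _ =>
          abs_sub_projIcc_le h1n ⟨by exact_mod_cast (hy i).1, by exact_mod_cast (hy i).2⟩ a

/-- `C(y) = min_{a ∈ ℝ} ∑ |yᵢ - a|` for `y ∈ {1,…,n+1}^d` equals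
`∑_{j=1}^{n} wt(#{i : yᵢ > j})`, where `wt(k) = min(k, d-k)`. The left-hand side is
expressed by saying that this value is the least element of the range of
`a ↦ ∑ |yᵢ - a|`. -/
theorem stmt5 (n d : ℕ) (hn : 1 ≤ n) (hd : 2 ≤ d) (y : Fin d → ℕ)
    (hy : ∀ i, 1 ≤ y i ∧ y i ≤ n + 1) :
    IsLeast (Set.range fun a : ℝ => ∑ i, |(y i : ℝ) - a|)
      (∑ j ∈ Finset.Icc 1 n,
        (min (Finset.univ.filter fun i => j < y i).card
             (d - (Finset.univ.filter fun i => j < y i).card) : ℝ)) :=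
  stmt5_general n d hd y hy
end

section
/- The cost array C on {1,...,n+1}^d defined by C(y) = min_{a ∈ ℝ} ∑_{i=1}^d |y_i - a| has the Monge property: for all y, z ∈ {1,...,n+1}^d, C(min(y,z)) + C(max(y,z)) ≤ C(y) + C(z), where min and max are taken componentwise. -/
open Finset

/-- `C(y) = min_{a ∈ ℝ} ∑ |yᵢ - a|` (the infimum is attained). -/
noncomputable def Cmin {d : ℕ} (y : Fin d → ℝ) : ℝ :=
  sInf (Set.range fun a : ℝ => ∑ i, |y i - a|)

lemma key_abs (u v a b : ℝ) :
    |min u v - min a b| + |max u v - max a b| ≤ |u - a| + |v - b| := by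
  rcases le_total u v with h1 | h1 <;> rcases le_total a b with h2 | h2 <;>
    simp only [min_eq_left, min_eq_right, max_eq_left, max_eq_right, h1, h2] <;>
    rcases abs_cases (u - b) with ⟨e1, f1⟩ | ⟨e1, f1⟩ <;>
    rcases abs_cases (v - a) with ⟨e2, f2⟩ | ⟨e2, f2⟩ <;>
    rcases abs_cases (u - a) with ⟨e3, f3⟩ | ⟨e3, f3⟩ <;>
    rcases abs_cases (v - b) with ⟨e4, f4⟩ | ⟨e4, f4⟩ <;>
    rcases abs_cases (b - v) with ⟨e5, f5⟩ | ⟨e5, f5⟩ <;>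
    rcases abs_cases (a - u) with ⟨e6, f6⟩ | ⟨e6, f6⟩ <;>
    linarith

lemma bdd_range {d : ℕ} (f : Fin d → ℝ) :
    BddBelow (Set.range fun a : ℝ => ∑ i, |f i - a|) := by
  refine ⟨0, ?_⟩
  rintro _ ⟨a, rfl⟩
  positivity

lemma Cmin_le {d : ℕ} (f : Fin d → ℝ) (a : ℝ) : Cmin f ≤ ∑ i, |f i - a| :=
  csInf_le (bdd_range f) ⟨a, rfl⟩

/-- The cost array `C` on `{1,…,n+1}^d` has the Monge property:
`C(min(y,z)) + C(max(y,z)) ≤ C(y) + C(z)` with componentwise min and max. -/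
theorem stmt7 (n d : ℕ) (hn : 1 ≤ n) (hd : 2 ≤ d) (y z : Fin d → ℕ)
    (hy : ∀ i, 1 ≤ y i ∧ y i ≤ n + 1) (hz : ∀ i, 1 ≤ z i ∧ z i ≤ n + 1) :
    Cmin (fun i => (min (y i) (z i) : ℝ)) + Cmin (fun i => (max (y i) (z i) : ℝ))
      ≤ Cmin (fun i => (y i : ℝ)) + Cmin (fun i => (z i : ℝ)) := by
  set K := Cmin (fun i => (min (y i) (z i) : ℝ)) + Cmin (fun i => (max (y i) (z i) : ℝ)) with hK
  have hmain : ∀ a b : ℝ, K ≤ (∑ i, |(y i : ℝ) - a|) + ∑ i, |(z i : ℝ) - b| := by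
    intro a b
    have h1 : K ≤ (∑ i, |(min (y i) (z i) : ℝ) - min a b|)
        + ∑ i, |(max (y i) (z i) : ℝ) - max a b| :=
      add_le_add (Cmin_le _ (min a b)) (Cmin_le _ (max a b))
    refine h1.trans ?_
    rw [← Finset.sum_add_distrib, ← Finset.sum_add_distrib]
    refine Finset.sum_le_sum fun i _ => ?_
    have := key_abs (y i : ℝ) (z i : ℝ) a b
    simpa [Nat.cast_min, Nat.cast_max] using this
  have h2 : ∀ b : ℝ, K - (∑ i, |(z i : ℝ) - b|) ≤ Cmin (fun i => (y i : ℝ)) := by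
    intro b
    refine le_csInf ⟨_, ⟨0, rfl⟩⟩ ?_
    rintro _ ⟨a, rfl⟩
    linarith [hmain a b]
  have h3 : K - Cmin (fun i => (y i : ℝ)) ≤ Cmin (fun i => (z i : ℝ)) := by
    refine le_csInf ⟨_, ⟨0, rfl⟩⟩ ?_
    rintro _ ⟨b, rfl⟩
    linarith [h2 b]
  linarith
end

section
/- For x = (x¹,...,x^d) ∈ (P_n)^d with formal polynomial G(x;q) := ∑_{i=1}^{d-1} ∑_{j=1}^{n} ΔX^{(i)}_j · q^{wt(i)}, the derivative at q = 1 recovers the EMD: G'(x;1) = ∑_{j=1}^n ∑_{i=1}^{d-1} wt(i)·ΔX^{(i)}_j = EMD(x). -/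
open Finset

/-- The cumulative sum `X_j = x₁ + ⋯ + x_j` of `x ∈ ℝ^{n+1}`. -/
noncomputable def cdf {n : ℕ} (x : Fin (n + 1) → ℝ) (j : ℕ) : ℝ :=
  ∑ k : Fin (n + 1), if (k : ℕ) < j then x k else 0

/-- The `i`-th smallest component (0-indexed) of the tuple `y`. -/
noncomputable def sortedNth {d : ℕ} (y : Fin d → ℝ) (i : ℕ) : ℝ :=
  if h : i < d then y (Tuple.sort y ⟨i, h⟩) else 0

/-! For sorted values `s₀ ≤ ⋯ ≤ s_{d-1}`, pairing `sᵢ` with `s_{d-1-i}` shows that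
`∑ |sᵢ - a| ≥ ∑_{i < d/2} (s_{d-1-i} - sᵢ)` for every `a`, with equality at the median
`a = s_{d/2}`; so this pairing sum is `C(s)`. Telescoping each `s_{d-1-i} - sᵢ` into gaps, the
gap `s_k - s_{k-1}` is counted once for every pair straddling it, i.e. `min(k, d-k)` times,
which is the Lee weight. -/

theorem sum_range_eq_sum_pairs_add_sum_middle {M : Type*} [AddCommMonoid M] (f : ℕ → M)
    (d : ℕ) :
    ∑ i ∈ range d, f i
      = ∑ i ∈ range (d / 2), (f i + f (d - 1 - i))
        + ∑ i ∈ Ico (d / 2) (d - d / 2), f i := by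
  rcases Nat.eq_zero_or_pos d with rfl | hd
  · simp
  have hreflect : ∑ i ∈ range (d / 2), f (d - 1 - i) = ∑ i ∈ Ico (d - d / 2) d, f i := by
    rw [range_eq_Ico, sum_Ico_reflect f 0 (by omega), Nat.sub_add_cancel hd, Nat.sub_zero]
  rw [sum_add_distrib, hreflect, add_right_comm, sum_range_add_sum_Ico _ (by omega),
    sum_range_add_sum_Ico _ (by omega)]

theorem sum_range_half_sub_reflect_le_sum_abs_sub (s : ℕ → ℝ) (d : ℕ) (a : ℝ) :
    ∑ i ∈ range (d / 2), (s (d - 1 - i) - s i) ≤ ∑ i ∈ range d, |s i - a| := by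
  rw [sum_range_eq_sum_pairs_add_sum_middle fun i => |s i - a|]
  have hpairs : ∑ i ∈ range (d / 2), (s (d - 1 - i) - s i)
      ≤ ∑ i ∈ range (d / 2), (|s i - a| + |s (d - 1 - i) - a|) :=
    sum_le_sum fun i _ => by
      linarith [le_abs_self (s (d - 1 - i) - a), neg_abs_le (s i - a)]
  have hmiddle : 0 ≤ ∑ i ∈ Ico (d / 2) (d - d / 2), |s i - a| :=
    sum_nonneg fun i _ => abs_nonneg _
  linarith

theorem sum_abs_sub_median_eq {s : ℕ → ℝ} {d : ℕ} (hs : MonotoneOn s (Set.Iio d)) :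
    ∑ i ∈ range d, |s i - s (d / 2)| = ∑ i ∈ range (d / 2), (s (d - 1 - i) - s i) := by
  rw [sum_range_eq_sum_pairs_add_sum_middle fun i => |s i - s (d / 2)|]
  have hmiddle : ∑ i ∈ Ico (d / 2) (d - d / 2), |s i - s (d / 2)| = 0 :=
    sum_eq_zero fun i hi => by
      rw [show i = d / 2 by simp only [mem_Ico] at hi; omega, sub_self, abs_zero]
  rw [hmiddle, add_zero]
  refine sum_congr rfl fun i hi => ?_
  have hi : i < d / 2 := mem_range.mp hi
  have hlow : s i ≤ s (d / 2) := hs (show i < d by omega) (show d / 2 < d by omega) (by omega)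
  have hhigh : s (d / 2) ≤ s (d - 1 - i) :=
    hs (show d / 2 < d by omega) (show d - 1 - i < d by omega) (by omega)
  rw [abs_of_nonpos (by linarith), abs_of_nonneg (by linarith)]
  ring

theorem isLeast_sum_abs_sub {s : ℕ → ℝ} {d : ℕ} (hs : MonotoneOn s (Set.Iio d)) :
    IsLeast (Set.range fun a => ∑ i ∈ range d, |s i - a|)
      (∑ i ∈ range (d / 2), (s (d - 1 - i) - s i)) :=
  ⟨⟨s (d / 2), sum_abs_sub_median_eq hs⟩, by
    rintro _ ⟨a, rfl⟩
    exact sum_range_half_sub_reflect_le_sum_abs_sub s d a⟩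

theorem sum_range_half_sub_reflect_eq_sum_weight_mul_gap (s : ℕ → ℝ) (d : ℕ) :
    ∑ i ∈ range (d / 2), (s (d - 1 - i) - s i)
      = ∑ k ∈ range (d - 1), ((min (k + 1) (d - 1 - k) : ℕ) : ℝ) * (s (k + 1) - s k) := by
  calc ∑ i ∈ range (d / 2), (s (d - 1 - i) - s i)
      = ∑ i ∈ range (d / 2), ∑ k ∈ Ico i (d - 1 - i), (s (k + 1) - s k) :=
        sum_congr rfl fun i hi => (sum_Ico_sub s (by have := mem_range.mp hi; omega)).symm
    _ = ∑ k ∈ range (d - 1), ∑ _i ∈ range (min (k + 1) (d - 1 - k)), (s (k + 1) - s k) :=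
        sum_comm' fun i k => by simp only [mem_range, mem_Ico, lt_min_iff]; omega
    _ = _ := by simp only [sum_const, card_range, nsmul_eq_mul]

theorem cast_min_sub_of_le {i d : ℕ} (h : i ≤ d) :
    ((min i (d - i) : ℕ) : ℝ) = min (i : ℝ) (d - i) := by
  rw [Nat.cast_min, Nat.cast_sub h]

theorem sortedNth_monotoneOn {d : ℕ} (y : Fin d → ℝ) :
    MonotoneOn (sortedNth y) (Set.Iio d) := by
  intro a ha b hb hab
  simp only [sortedNth, dif_pos (show a < d from ha), dif_pos (show b < d from hb)]
  exact Tuple.monotone_sort y (show (⟨a, ha⟩ : Fin d) ≤ ⟨b, hb⟩ from hab)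

theorem sum_comp_eq_sum_range_sortedNth {d : ℕ} {M : Type*} [AddCommMonoid M] (y : Fin d → ℝ)
    (f : ℝ → M) : ∑ i, f (y i) = ∑ i ∈ range d, f (sortedNth y i) := by
  rw [← Equiv.sum_comp (Tuple.sort y), ← Fin.sum_univ_eq_sum_range]
  simp [sortedNth]

theorem Cmin_eq_sum_range_half_sortedNth_sub {d : ℕ} (y : Fin d → ℝ) :
    Cmin y = ∑ i ∈ range (d / 2), (sortedNth y (d - 1 - i) - sortedNth y i) := by
  have hsort : (fun a => ∑ i, |y i - a|) = fun a => ∑ i ∈ range d, |sortedNth y i - a| :=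
    funext fun a => sum_comp_eq_sum_range_sortedNth y fun t => |t - a|
  rw [Cmin, hsort, (isLeast_sum_abs_sub (sortedNth_monotoneOn y)).csInf_eq]

theorem sum_leeWeight_mul_sortedNth_sub_eq_Cmin {d : ℕ} (y : Fin d → ℝ) :
    ∑ i ∈ Ico 1 d, (min i (d - i) : ℝ) * (sortedNth y i - sortedNth y (i - 1)) = Cmin y := by
  rw [Cmin_eq_sum_range_half_sortedNth_sub, sum_range_half_sub_reflect_eq_sum_weight_mul_gap,
    sum_Ico_eq_sum_range]
  refine sum_congr rfl fun k hk => ?_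
  have hk : k < d - 1 := mem_range.mp hk
  rw [← cast_min_sub_of_le (by omega : 1 + k ≤ d), Nat.add_sub_cancel_left, add_comm 1 k,
    show d - (k + 1) = d - 1 - k by omega]

theorem Polynomial.eval_one_derivative_C_mul_X_pow {R : Type*} [CommSemiring R] (a : R)
    (k : ℕ) : (derivative (C a * X ^ k)).eval 1 = k * a := by
  rw [derivative_C_mul_X_pow]
  simp [mul_comm]

/-- `ΔX^{(i)}_j` (paper's 1-indexed `i`) is `sortedNth _ i - sortedNth _ (i - 1)`. -/
theorem stmt12_general (n d : ℕ) (x : Fin d → Fin (n + 1) → ℝ)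
    (G : Polynomial ℝ)
    (hG : G = ∑ i ∈ Finset.Ico 1 d, ∑ j ∈ Finset.Icc 1 n,
        Polynomial.C (sortedNth (fun i' => cdf (x i') j) i
            - sortedNth (fun i' => cdf (x i') j) (i - 1))
          * Polynomial.X ^ (min i (d - i))) :
    Polynomial.eval 1 (Polynomial.derivative G)
        = ∑ j ∈ Finset.Icc 1 n, ∑ i ∈ Finset.Ico 1 d, (min i (d - i) : ℝ)
            * (sortedNth (fun i' => cdf (x i') j) i
                - sortedNth (fun i' => cdf (x i') j) (i - 1))
      ∧ Polynomial.eval 1 (Polynomial.derivative G)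
        = ∑ j ∈ Finset.Icc 1 n, Cmin (fun i => cdf (x i) j) := by
  have hderiv : Polynomial.eval 1 (Polynomial.derivative G)
      = ∑ j ∈ Icc 1 n, ∑ i ∈ Ico 1 d, (min i (d - i) : ℝ)
          * (sortedNth (fun i' => cdf (x i') j) i
              - sortedNth (fun i' => cdf (x i') j) (i - 1)) := by
    subst hG
    simp only [map_sum, Polynomial.eval_finsetSum, Polynomial.eval_one_derivative_C_mul_X_pow]
    rw [sum_comm]
    refine sum_congr rfl fun j _ => sum_congr rfl fun i hi => ?_
    rw [cast_min_sub_of_le (mem_Ico.mp hi).2.le]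
  exact ⟨hderiv,
    hderiv.trans (sum_congr rfl fun j _ => sum_leeWeight_mul_sortedNth_sub_eq_Cmin _)⟩

/-- For `G(x;q) = ∑_{i=1}^{d-1} ∑_{j=1}^{n} ΔX^{(i)}_j q^{wt(i)}`, the derivative at
`q = 1` equals `∑_j ∑_i wt(i) ΔX^{(i)}_j`, which is `EMD(x) = ∑_j C(X¹_j, …, X^d_j)`.
Here `ΔX^{(i)}_j` (paper's 1-indexed `i`) is `sortedNth _ i - sortedNth _ (i-1)`. -/
theorem stmt12 (n d : ℕ) (hn : 1 ≤ n) (hd : 2 ≤ d) (x : Fin d → Fin (n + 1) → ℝ)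
    (hx : ∀ i, (∀ k, 0 ≤ x i k) ∧ ∑ k, x i k = 1)
    (G : Polynomial ℝ)
    (hG : G = ∑ i ∈ Finset.Ico 1 d, ∑ j ∈ Finset.Icc 1 n,
        Polynomial.C (sortedNth (fun i' => cdf (x i') j) i
            - sortedNth (fun i' => cdf (x i') j) (i - 1))
          * Polynomial.X ^ (min i (d - i))) :
    Polynomial.eval 1 (Polynomial.derivative G)
        = ∑ j ∈ Finset.Icc 1 n, ∑ i ∈ Finset.Ico 1 d, (min i (d - i) : ℝ)
            * (sortedNth (fun i' => cdf (x i') j) i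
                - sortedNth (fun i' => cdf (x i') j) (i - 1))
      ∧ Polynomial.eval 1 (Polynomial.derivative G)
        = ∑ j ∈ Finset.Icc 1 n, Cmin (fun i => cdf (x i) j) :=
  stmt12_general n d x G hG
end

section
/- (Cayley–Menger type formula for EMD) For any x = (x¹,...,x^d) ∈ (P_n)^d, one has EMD(x) = (1/(d-1)) · [G''(x;1) + ∑_{1 ≤ k < ℓ ≤ d} EMD(x^k, x^ℓ)], where G''(x;1) = ∑_{j=1}^n ∑_{i=1}^{d-1} wt(i)(wt(i)-1)·ΔX^{(i)}_j. -/
open Finset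

/-!
The identity holds separately for every `j`, for an arbitrary tuple `y = (X¹_j, …, X^d_j)`.
Sorting `y` does not change `∑_{k<ℓ} |y_k - y_ℓ|`, and for sorted values each gap
`ΔX^{(i)}` lies between `y_k` and `y_ℓ` for exactly `i (d - i)` pairs, so the pair sum is
`∑_i i (d - i) ΔX^{(i)}`. The weights then combine by `w (w - 1) + i (d - i) = (d - 1) w`
for `w = min(i, d - i)`.
-/

theorem Finset.sum_Ioc_sub_pred {M : Type*} [AddCommGroup M] (g : ℕ → M) {a b : ℕ}
    (hab : a ≤ b) : ∑ i ∈ Ioc a b, (g i - g (i - 1)) = g b - g a := by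
  rw [← Ico_add_one_add_one_eq_Ioc, ← sum_Ico_add' (fun i => g i - g (i - 1))]
  simpa using sum_Ico_sub g hab

theorem Fin.card_filter_lt_and_le (d i : ℕ) :
    #{p : Fin d × Fin d | (p.1 : ℕ) < i ∧ i ≤ (p.2 : ℕ)} = min d i * (d - i) := by
  have hle : #{b : Fin d | i ≤ (b : ℕ)} = d - i := by
    simp only [← not_lt, filter_not, card_sdiff_of_subset (filter_subset _ _), card_univ,
      Fintype.card_fin, Fin.card_filter_val_lt]
    omega
  have hprod : univ.filter (fun p : Fin d × Fin d => (p.1 : ℕ) < i ∧ i ≤ (p.2 : ℕ))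
      = univ.filter (fun a : Fin d => (a : ℕ) < i)
          ×ˢ univ.filter (fun b : Fin d => i ≤ (b : ℕ)) := by
    ext; simp
  rw [hprod, card_product, Fin.card_filter_val_lt, hle]

theorem sum_filter_lt_sub_eq_sum_Ico {M : Type*} [AddCommGroup M] (d : ℕ) (g : ℕ → M) :
    ∑ p ∈ univ.filter (fun p : Fin d × Fin d => p.1 < p.2), (g p.2 - g p.1)
      = ∑ i ∈ Ico 1 d, (i * (d - i)) • (g i - g (i - 1)) := by
  calc ∑ p ∈ univ.filter (fun p : Fin d × Fin d => p.1 < p.2), (g p.2 - g p.1)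
      = ∑ p ∈ univ.filter (fun p : Fin d × Fin d => p.1 < p.2),
          ∑ i ∈ Ico 1 d, if (p.1 : ℕ) < i ∧ i ≤ (p.2 : ℕ) then g i - g (i - 1) else 0 := by
        refine sum_congr rfl fun p hp => ?_
        rw [← sum_Ioc_sub_pred g (mem_filter.mp hp).2.le, ← sum_filter]
        congr 1
        ext i
        simp only [mem_Ioc, mem_filter, mem_Ico]
        omega
    _ = ∑ i ∈ Ico 1 d,
          ∑ p : Fin d × Fin d with (p.1 : ℕ) < i ∧ i ≤ (p.2 : ℕ), (g i - g (i - 1)) := by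
        rw [sum_comm]
        refine sum_congr rfl fun i _ => ?_
        rw [← sum_filter, filter_filter]
        congr 1
        ext p
        simp only [mem_filter, mem_univ, true_and, Fin.lt_def]
        omega
    _ = _ := by
        refine sum_congr rfl fun i hi => ?_
        rw [sum_const, Fin.card_filter_lt_and_le, min_eq_right (mem_Ico.mp hi).2.le]

theorem sum_filter_lt_eq_sum_sym2_not_isDiag {ι M : Type*} [LinearOrder ι] [Fintype ι]
    [AddCommMonoid M] (g : Sym2 ι → M) :
    ∑ p ∈ univ.filter (fun p : ι × ι => p.1 < p.2), g s(p.1, p.2)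
      = ∑ z ∈ univ.sym2 with ¬ z.IsDiag, g z := by
  rw [sum_sym2_filter_not_isDiag]
  congr 1
  ext p
  simp [lt_iff_le_and_ne]

theorem sum_filter_lt_comp_perm {ι M : Type*} [LinearOrder ι] [Fintype ι] [AddCommMonoid M]
    (f : ι → ι → M) (hf : ∀ a b, f a b = f b a) (σ : Equiv.Perm ι) :
    ∑ p ∈ univ.filter (fun p : ι × ι => p.1 < p.2), f (σ p.1) (σ p.2)
      = ∑ p ∈ univ.filter (fun p : ι × ι => p.1 < p.2), f p.1 p.2 := by
  let F : Sym2 ι → M := Sym2.lift ⟨f, hf⟩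
  calc _ = ∑ z ∈ univ.sym2 with ¬ z.IsDiag, F (z.map σ) :=
        sum_filter_lt_eq_sum_sym2_not_isDiag (F ∘ Sym2.map σ)
    _ = ∑ z ∈ univ.sym2 with ¬ z.IsDiag, F z :=
        sum_nbij' (Sym2.map σ) (Sym2.map σ.symm)
          (by simp [Sym2.isDiag_map σ.injective]) (by simp [Sym2.isDiag_map σ.symm.injective])
          (by simp [Sym2.map_map]) (by simp [Sym2.map_map]) (fun _ _ => rfl)
    _ = _ := (sum_filter_lt_eq_sum_sym2_not_isDiag F).symm

theorem sum_filter_lt_abs_sub_eq_sum_sortedNth {d : ℕ} (y : Fin d → ℝ) :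
    ∑ p ∈ univ.filter (fun p : Fin d × Fin d => p.1 < p.2), |y p.1 - y p.2|
      = ∑ i ∈ Ico 1 d, (i * (d - i)) • (sortedNth y i - sortedNth y (i - 1)) := by
  have hsorted : ∀ a : Fin d, sortedNth y a = y (Tuple.sort y a) := by simp [sortedNth]
  rw [← sum_filter_lt_comp_perm _ (fun a b => abs_sub_comm (y a) (y b)) (Tuple.sort y),
    ← sum_filter_lt_sub_eq_sum_Ico]
  refine sum_congr rfl fun p hp => ?_
  have hmono : y (Tuple.sort y p.1) ≤ y (Tuple.sort y p.2) :=
    Tuple.monotone_sort y (mem_filter.mp hp).2.le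
  rw [hsorted, hsorted, abs_sub_comm, abs_of_nonneg (sub_nonneg.2 hmono)]

theorem min_mul_min_sub_one_add_mul {R : Type*} [CommRing R] [LinearOrder R] (a b : R) :
    min a b * (min a b - 1) + a * b = (a + b - 1) * min a b := by
  rcases le_total a b with h | h
  · rw [min_eq_left h]; ring
  · rw [min_eq_right h]; ring

theorem sub_one_mul_sum_min_mul_sortedNth {d : ℕ} (y : Fin d → ℝ) :
    ((d : ℝ) - 1) * ∑ i ∈ Ico 1 d, (min i (d - i) : ℝ) * (sortedNth y i - sortedNth y (i - 1))
      = ∑ i ∈ Ico 1 d, (min i (d - i) : ℝ) * ((min i (d - i) : ℝ) - 1)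
            * (sortedNth y i - sortedNth y (i - 1))
        + ∑ p ∈ univ.filter (fun p : Fin d × Fin d => p.1 < p.2), |y p.1 - y p.2| := by
  rw [sum_filter_lt_abs_sub_eq_sum_sortedNth, mul_sum, ← sum_add_distrib]
  refine sum_congr rfl fun i hi => ?_
  rw [nsmul_eq_mul, Nat.cast_mul, Nat.cast_sub (mem_Ico.mp hi).2.le, ← mul_assoc, ← add_mul,
    min_mul_min_sub_one_add_mul, add_sub_cancel, mul_assoc]

theorem stmt13_general (n d : ℕ) (hd : 2 ≤ d) (x : Fin d → Fin (n + 1) → ℝ) :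
    ∑ j ∈ Finset.Icc 1 n, ∑ i ∈ Finset.Ico 1 d, (min i (d - i) : ℝ)
        * (sortedNth (fun i' => cdf (x i') j) i - sortedNth (fun i' => cdf (x i') j) (i - 1))
      = (1 / (d - 1 : ℝ))
        * ((∑ j ∈ Finset.Icc 1 n, ∑ i ∈ Finset.Ico 1 d,
              (min i (d - i) : ℝ) * ((min i (d - i) : ℝ) - 1)
                * (sortedNth (fun i' => cdf (x i') j) i
                    - sortedNth (fun i' => cdf (x i') j) (i - 1)))
          + ∑ p ∈ Finset.univ.filter (fun p : Fin d × Fin d => p.1 < p.2),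
              ∑ j ∈ Finset.Icc 1 n, |cdf (x p.1) j - cdf (x p.2) j|) := by
  have hd1 : (d : ℝ) - 1 ≠ 0 := by
    have : (2 : ℝ) ≤ d := by exact_mod_cast hd
    linarith
  rw [sum_comm (s := univ.filter fun p : Fin d × Fin d => p.1 < p.2), ← sum_add_distrib]
  simp only [← sub_one_mul_sum_min_mul_sortedNth]
  rw [← mul_sum, one_div, inv_mul_cancel_left₀ hd1]

/-- Cayley–Menger type formula for the EMD:
`EMD(x) = (1/(d-1)) [G''(x;1) + ∑_{k<ℓ} EMD(x^k, x^ℓ)]`, where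
`EMD(x) = ∑_j ∑_i wt(i) ΔX^{(i)}_j`,
`G''(x;1) = ∑_j ∑_i wt(i)(wt(i)-1) ΔX^{(i)}_j`, and
`EMD(x^k, x^ℓ) = ∑_j |X^k_j - X^ℓ_j|`. -/
theorem stmt13 (n d : ℕ) (hn : 1 ≤ n) (hd : 2 ≤ d) (x : Fin d → Fin (n + 1) → ℝ)
    (hx : ∀ i, (∀ k, 0 ≤ x i k) ∧ ∑ k, x i k = 1) :
    ∑ j ∈ Finset.Icc 1 n, ∑ i ∈ Finset.Ico 1 d, (min i (d - i) : ℝ)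
        * (sortedNth (fun i' => cdf (x i') j) i - sortedNth (fun i' => cdf (x i') j) (i - 1))
      = (1 / (d - 1 : ℝ))
        * ((∑ j ∈ Finset.Icc 1 n, ∑ i ∈ Finset.Ico 1 d,
              (min i (d - i) : ℝ) * ((min i (d - i) : ℝ) - 1)
                * (sortedNth (fun i' => cdf (x i') j) i
                    - sortedNth (fun i' => cdf (x i') j) (i - 1)))
          + ∑ p ∈ Finset.univ.filter (fun p : Fin d × Fin d => p.1 < p.2),
              ∑ j ∈ Finset.Icc 1 n, |cdf (x p.1) j - cdf (x p.2) j|) :=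
  stmt13_general n d hd x
end

section
/- For 1 ≤ k ≤ ⌈d/2⌉ and x ∈ (P_n)^d, the k-th derivative of G(x;q) at q = 1, namely ∑_{i=1}^{d-1} ∑_{j=1}^n ΔX^{(i)}_j · wt(i)(wt(i)-1)⋯(wt(i)-k+1), is nonnegative, and equals zero if and only if X^{(k)}_j = X^{(k+1)}_j = ... = X^{(d-k+1)}_j for all 1 ≤ j ≤ n. -/
open Finset

/-! The weight `wt(i)` is `min i (d - i)`, and the `k`-th derivative of `q ^ wt(i)` at `q = 1`
is the falling factorial `wt(i).descFactorial k`: nonnegative, and positive exactly on the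
middle range `k ≤ i ≤ d - k`. Each `ΔX^{(i)}_j` is nonnegative because the order statistics are
monotone, so the derivative vanishes iff every gap in the middle range closes, i.e. iff the
order statistics `k - 1, …, d - k` (0-indexed) coincide. -/

lemma sortedNth_mono {d : ℕ} (y : Fin d → ℝ) {i i' : ℕ} (h : i ≤ i') (h' : i' < d) :
    sortedNth y i ≤ sortedNth y i' := by
  have hi : i < d := h.trans_lt h'
  simp only [sortedNth, dif_pos hi, dif_pos h']
  exact Tuple.monotone_sort y (show (⟨i, hi⟩ : Fin d) ≤ ⟨i', h'⟩ from h)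

lemma prod_range_min_sub_eq_descFactorial {i d : ℕ} (h : i ≤ d) (k : ℕ) :
    ∏ m ∈ range k, (min (i : ℝ) (d - i) - m) = (min i (d - i)).descFactorial k := by
  rw [← descPochhammer_eval_eq_descFactorial, descPochhammer_eval_eq_prod_range,
    Nat.cast_min, Nat.cast_sub h]

lemma prod_range_min_sub_nonneg {i d : ℕ} (h : i ≤ d) (k : ℕ) :
    0 ≤ ∏ m ∈ range k, (min (i : ℝ) (d - i) - m) := by
  rw [prod_range_min_sub_eq_descFactorial h]
  positivity

lemma prod_range_min_sub_eq_zero_iff {i d : ℕ} (h : i ≤ d) (k : ℕ) :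
    ∏ m ∈ range k, (min (i : ℝ) (d - i) - m) = 0 ↔ ¬ (k ≤ i ∧ i ≤ d - k) := by
  rw [prod_range_min_sub_eq_descFactorial h, Nat.cast_eq_zero, Nat.descFactorial_eq_zero_iff_lt]
  omega

lemma sum_sum_eq_zero_iff_of_nonneg {ι κ M : Type*} [AddCommMonoid M] [PartialOrder M]
    [IsOrderedAddMonoid M] {s : Finset ι} {t : Finset κ} {f : ι → κ → M}
    (hf : ∀ i ∈ s, ∀ j ∈ t, 0 ≤ f i j) :
    ∑ i ∈ s, ∑ j ∈ t, f i j = 0 ↔ ∀ i ∈ s, ∀ j ∈ t, f i j = 0 := by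
  rw [sum_eq_zero_iff_of_nonneg fun i hi => sum_nonneg (hf i hi)]
  exact forall₂_congr fun i hi => sum_eq_zero_iff_of_nonneg (hf i hi)

lemma forall_mem_Icc_eq_left_iff {α : Type*} (s : ℕ → α) (a b : ℕ) :
    (∀ i ∈ Icc a b, s i = s a) ↔ ∀ i ∈ Ioc a b, s i = s (i - 1) := by
  constructor
  · intro hs i hi
    simp only [mem_Ioc] at hi
    rw [hs i (mem_Icc.2 ⟨hi.1.le, hi.2⟩), hs (i - 1) (mem_Icc.2 ⟨by omega, by omega⟩)]
  · intro hs i hi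
    simp only [mem_Icc] at hi
    induction i, hi.1 using Nat.le_induction with
    | base => rfl
    | succ i hai ih => rw [hs (i + 1) (mem_Ioc.2 ⟨by omega, hi.2⟩), Nat.add_sub_cancel,
        ih ⟨hai, by omega⟩]

theorem stmt14_general (n d : ℕ) (x : Fin d → Fin (n + 1) → ℝ)
    (k : ℕ) (hk1 : 1 ≤ k)
    (D : ℝ)
    (hD : D = ∑ i ∈ Finset.Ico 1 d, ∑ j ∈ Finset.Icc 1 n,
        (sortedNth (fun i' => cdf (x i') j) i - sortedNth (fun i' => cdf (x i') j) (i - 1))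
          * ∏ m ∈ Finset.range k, ((min i (d - i) : ℝ) - m)) :
    0 ≤ D ∧
      (D = 0 ↔ ∀ j ∈ Finset.Icc 1 n, ∀ i ∈ Finset.Icc (k - 1) (d - k),
        sortedNth (fun i' => cdf (x i') j) i = sortedNth (fun i' => cdf (x i') j) (k - 1)) := by
  set s : ℕ → ℕ → ℝ := fun j => sortedNth fun i' => cdf (x i') j
  have hterm : ∀ i ∈ Ico 1 d, ∀ j ∈ Icc 1 n,
      0 ≤ (s j i - s j (i - 1)) * ∏ m ∈ range k, ((min i (d - i) : ℝ) - m) := by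
    intro i hi j _
    have hi := mem_Ico.1 hi
    exact mul_nonneg (sub_nonneg.2 (sortedNth_mono _ (Nat.sub_le i 1) hi.2))
      (prod_range_min_sub_nonneg hi.2.le k)
  have hterm_eq_zero : ∀ i ∈ Ico 1 d, ∀ j ∈ Icc 1 n,
      (s j i - s j (i - 1)) * ∏ m ∈ range k, ((min i (d - i) : ℝ) - m) = 0 ↔
        (i ∈ Ioc (k - 1) (d - k) → s j i = s j (i - 1)) := by
    intro i hi j _
    rw [mul_eq_zero, sub_eq_zero, prod_range_min_sub_eq_zero_iff (mem_Ico.1 hi).2.le, mem_Ioc,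
      Nat.sub_lt_iff_lt_add hk1, Nat.lt_add_one_iff]
    tauto
  refine ⟨hD ▸ sum_nonneg fun i hi => sum_nonneg (hterm i hi), ?_⟩
  rw [hD, sum_sum_eq_zero_iff_of_nonneg hterm]
  refine (forall₂_congr fun i hi => forall₂_congr (hterm_eq_zero i hi)).trans
    (Iff.trans ?_ (forall₂_congr fun j (_ : j ∈ Icc 1 n) =>
      (forall_mem_Icc_eq_left_iff (s j) (k - 1) (d - k)).symm))
  have hmiddle : Ioc (k - 1) (d - k) ⊆ Ico 1 d := fun i hi => by
    simp only [mem_Ioc, mem_Ico] at hi ⊢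
    omega
  exact ⟨fun h j hj i hi => h i (hmiddle hi) j hj hi, fun h i _ j hj hi => h j hj i hi⟩

/-- For `1 ≤ k ≤ ⌈d/2⌉`, the `k`-th derivative of `G(x;q)` at `q = 1`, namely
`D = ∑_{i=1}^{d-1} ∑_{j=1}^{n} ΔX^{(i)}_j · wt(i)(wt(i)-1)⋯(wt(i)-k+1)`, is
nonnegative, and vanishes iff `X^{(k)}_j = ⋯ = X^{(d-k+1)}_j` for all `1 ≤ j ≤ n`
(0-indexed sorted positions `k-1, …, d-k`). -/
theorem stmt14 (n d : ℕ) (hn : 1 ≤ n) (hd : 2 ≤ d) (x : Fin d → Fin (n + 1) → ℝ)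
    (hx : ∀ i, (∀ m, 0 ≤ x i m) ∧ ∑ m, x i m = 1)
    (k : ℕ) (hk1 : 1 ≤ k) (hk2 : k ≤ (d + 1) / 2)
    (D : ℝ)
    (hD : D = ∑ i ∈ Finset.Ico 1 d, ∑ j ∈ Finset.Icc 1 n,
        (sortedNth (fun i' => cdf (x i') j) i - sortedNth (fun i' => cdf (x i') j) (i - 1))
          * ∏ m ∈ Finset.range k, ((min i (d - i) : ℝ) - m)) :
    0 ≤ D ∧
      (D = 0 ↔ ∀ j ∈ Finset.Icc 1 n, ∀ i ∈ Finset.Icc (k - 1) (d - k),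
        sortedNth (fun i' => cdf (x i') j) i = sortedNth (fun i' => cdf (x i') j) (k - 1)) :=
  stmt14_general n d x k hk1 D hD
end
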